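/- Let B be a real p×q matrix, G a symmetric real q×q matrix, and G' a symmetric real p×p matrix, and let A = [[G', B, B],[Bᵀ, 0, G],[Bᵀ, G, 0]]. If x ∈ ℝ^p and y, z ∈ ℝ^q satisfy A · (x, y, z) = λ · (x, y, z), then G · (z − y) = −λ · (z − y); consequently, either y = z or −λ is an eigenvalue of G. -/

import Mathlib

/-!
The two lower block rows of `A` read `Bᵀx + Gz = λy` and `Bᵀx + Gy = λz`; subtracting them
eliminates `Bᵀx` and leaves `G (z - y) = -λ (z - y)`.
-/

open Matrix

/-- The matrix `A = [[G', B, B], [Bᵀ, 0, G], [Bᵀ, G, 0]]` of Construction II,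
indexed by `Fin p ⊕ (Fin q ⊕ Fin q)`. -/
def matA (p q : ℕ) (B : Matrix (Fin p) (Fin q) ℝ) (G : Matrix (Fin q) (Fin q) ℝ)
    (G' : Matrix (Fin p) (Fin p) ℝ) :
    Matrix (Fin p ⊕ (Fin q ⊕ Fin q)) (Fin p ⊕ (Fin q ⊕ Fin q)) ℝ :=
  Matrix.fromBlocks G' (Matrix.fromCols B B) (Matrix.fromRows Bᵀ Bᵀ)
    (Matrix.fromBlocks 0 G G 0)

theorem Sum.smul_elim {M α β γ : Type*} [SMul M γ] (c : M) (f : α → γ) (g : β → γ) :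
    c • Sum.elim f g = Sum.elim (c • f) (c • g) := by
  ext (_ | _) <;> rfl

section

variable {R : Type*} [CommRing R] {m n : Type*} [Fintype m] [Fintype n]

theorem add_mulVec_eq_smul_of_fromBlocks_mulVec_eq_smul {G' : Matrix m m R}
    {C : Matrix m (n ⊕ n) R} {D : Matrix n m R} {G : Matrix n n R} {x : m → R} {y z : n → R}
    {l : R}
    (hev : fromBlocks G' C (fromRows D D) (fromBlocks 0 G G 0) *ᵥ Sum.elim x (Sum.elim y z) =
      l • Sum.elim x (Sum.elim y z)) :
    D *ᵥ x + G *ᵥ z = l • y ∧ D *ᵥ x + G *ᵥ y = l • z := by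
  simp only [fromBlocks_mulVec, fromRows_mulVec, Sum.elim_comp_inl, Sum.elim_comp_inr,
    zero_mulVec, zero_add, add_zero, Sum.smul_elim, ← Sum.elim_add_add, Sum.elim_eq_iff] at hev
  exact hev.2

theorem mulVec_sub_eq_neg_smul_of_add_mulVec_eq_smul {G : Matrix n n R} {c y z : n → R} {l : R}
    (hy : c + G *ᵥ z = l • y) (hz : c + G *ᵥ y = l • z) :
    G *ᵥ (z - y) = (-l) • (z - y) := by
  rw [mulVec_sub, neg_smul, smul_sub]
  linear_combination hy - hz

end

theorem key_observation (p q : ℕ) (B : Matrix (Fin p) (Fin q) ℝ)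
    (G : Matrix (Fin q) (Fin q) ℝ) (G' : Matrix (Fin p) (Fin p) ℝ)
    (x : Fin p → ℝ) (y z : Fin q → ℝ) (l : ℝ)
    (hev : matA p q B G G' *ᵥ Sum.elim x (Sum.elim y z) =
      l • Sum.elim x (Sum.elim y z)) :
    G *ᵥ (z - y) = (-l) • (z - y) ∧
      (y = z ∨ ∃ w : Fin q → ℝ, w ≠ 0 ∧ G *ᵥ w = (-l) • w) := by
  obtain ⟨hy, hz⟩ := add_mulVec_eq_smul_of_fromBlocks_mulVec_eq_smul hev
  have hsub := mulVec_sub_eq_neg_smul_of_add_mulVec_eq_smul hy hz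
  exact ⟨hsub, or_iff_not_imp_left.2 fun hyz => ⟨z - y, sub_ne_zero.2 (Ne.symm hyz), hsub⟩⟩
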